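/- arXiv:1211.7057 — 4 statements merged into one kernel-verified Lean document; each statement's English description precedes it below -/
import Mathlib

section
/- If G is a 2-uniform graph (simple graph) whose largest clique has order t, then λ(G) = (1/2)(1 − 1/t). -/
open Finset

/-- The evaluation of the Lagrangian polynomial of a hypergraph with edge set `E`
at a weighting `x`. -/
noncomputable def lagEval {n : ℕ} (E : Finset (Finset (Fin n))) (x : Fin n → ℝ) : ℝ :=
  ∑ e ∈ E, ∏ i ∈ e, x i

/-- A legal weighting: nonnegative entries summing to 1. -/
def IsLegal {n : ℕ} (x : Fin n → ℝ) : Prop :=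
  (∀ i, 0 ≤ x i) ∧ ∑ i, x i = 1

/-- The Lagrangian of a hypergraph: supremum of the Lagrangian polynomial over the simplex. -/
noncomputable def lagrangian {n : ℕ} (E : Finset (Finset (Fin n))) : ℝ :=
  sSup {v | ∃ x, IsLegal x ∧ lagEval E x = v}

/-- `s` is a clique of the graph with edge set `E`: every pair of distinct vertices
of `s` forms an edge. -/
def IsClique' {n : ℕ} (E : Finset (Finset (Fin n))) (s : Finset (Fin n)) : Prop :=
  ∀ i ∈ s, ∀ j ∈ s, i ≠ j → ({i, j} : Finset (Fin n)) ∈ E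

/-! For a 2-graph, `2 λ(E, x) ≤ (∑ x)² - ∑ x²`, and `∑ x² ≥ 1 / |supp x|` by Cauchy–Schwarz on
the support, so a legal weighting supported on a clique has `λ(E, x) ≤ (1 - 1/t)/2`. Every legal
weighting can be replaced by one supported on a clique without decreasing `λ`: if `i, j` in the
support are not adjacent, no edge contains both, so `λ` is affine along `x + s (e_i - e_j)`, and
moving all the weight of one of them onto the other does not decrease `λ` and shrinks the support. The uniform weighting on a
maximum clique attains the bound. -/

theorem Finset.two_mul_sum_powersetCard_two_prod {ι R : Type*} [DecidableEq ι] [CommRing R]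
    (s : Finset ι) (f : ι → R) :
    2 * ∑ e ∈ s.powersetCard 2, ∏ i ∈ e, f i = (∑ i ∈ s, f i) ^ 2 - ∑ i ∈ s, f i ^ 2 := by
  induction s using Finset.induction_on with
  | empty => rw [powersetCard_eq_empty.2 (by simp)]; simp
  | @insert a s ha ih =>
    have hdisj : Disjoint (s.powersetCard 2) ((s.powersetCard 1).image (insert a)) := by
      simp only [disjoint_left, mem_powersetCard, mem_image]
      rintro _ ⟨hsub, -⟩ ⟨e, -, rfl⟩
      exact ha (hsub (mem_insert_self a e))
    have hinj : Set.InjOn (insert a) (s.powersetCard 1 : Set (Finset ι)) := by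
      intro e₁ h₁ e₂ h₂ h
      rw [mem_coe, mem_powersetCard] at h₁ h₂
      rw [← erase_insert (fun h' ↦ ha (h₁.1 h')), ← erase_insert (fun h' ↦ ha (h₂.1 h')), h]
    have hpairs : ∑ e ∈ s.powersetCard 1, ∏ i ∈ insert a e, f i = f a * ∑ i ∈ s, f i := by
      rw [powersetCard_one, sum_map, mul_sum]
      refine sum_congr rfl fun i hi ↦ ?_
      rw [Function.Embedding.coeFn_mk, prod_pair (by rintro rfl; exact ha hi)]
    rw [powersetCard_succ_insert ha, sum_union hdisj, sum_image hinj, hpairs, sum_insert ha,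
      sum_insert ha, mul_add, ih]
    ring

variable {n : ℕ}

lemma IsClique'.powersetCard_two_subset {E : Finset (Finset (Fin n))} {s : Finset (Fin n)}
    (hs : IsClique' E s) : s.powersetCard 2 ⊆ E := by
  intro e he
  obtain ⟨hes, hcard⟩ := mem_powersetCard.1 he
  obtain ⟨a, b, hab, rfl⟩ := card_eq_two.1 hcard
  exact hs a (hes (mem_insert_self a _)) b (hes (mem_insert_of_mem (mem_singleton_self b))) hab

lemma notMem_of_pair_notMem {E : Finset (Finset (Fin n))} (hE : ∀ e ∈ E, #e = 2)
    {i j : Fin n} (hij : i ≠ j) (hnE : ({i, j} : Finset (Fin n)) ∉ E) {e : Finset (Fin n)}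
    (he : e ∈ E) (hi : i ∈ e) : j ∉ e := by
  intro hj
  have hsub : ({i, j} : Finset (Fin n)) ⊆ e := insert_subset hi (singleton_subset_iff.2 hj)
  rw [eq_of_subset_of_card_le hsub (by rw [hE e he, card_pair hij])] at hnE
  exact hnE he

lemma two_mul_lagEval_le {E : Finset (Finset (Fin n))} (hE : ∀ e ∈ E, #e = 2)
    {x : Fin n → ℝ} (hx : ∀ i, 0 ≤ x i) :
    2 * lagEval E x ≤ (∑ i, x i) ^ 2 - ∑ i, x i ^ 2 := by
  rw [← two_mul_sum_powersetCard_two_prod]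
  refine mul_le_mul_of_nonneg_left (sum_le_sum_of_subset_of_nonneg ?_ ?_) zero_le_two
  · exact fun e he ↦ mem_powersetCard.2 ⟨subset_univ e, hE e he⟩
  · exact fun e _ _ ↦ prod_nonneg fun i _ ↦ hx i

lemma sum_powersetCard_two_le_lagEval {E : Finset (Finset (Fin n))} {s : Finset (Fin n)}
    (hs : IsClique' E s) {x : Fin n → ℝ} (hx : ∀ i, 0 ≤ x i) :
    ∑ e ∈ s.powersetCard 2, ∏ i ∈ e, x i ≤ lagEval E x :=
  sum_le_sum_of_subset_of_nonneg hs.powersetCard_two_subset fun _ _ _ ↦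
    prod_nonneg fun i _ ↦ hx i

noncomputable def weightSupport (x : Fin n → ℝ) : Finset (Fin n) := univ.filter (x · ≠ 0)

lemma one_le_card_weightSupport_mul_sum_sq {x : Fin n → ℝ} (hx : ∑ i, x i = 1) :
    1 ≤ #(weightSupport x) * ∑ i, x i ^ 2 := by
  have hsq : ∑ i ∈ weightSupport x, x i ^ 2 = ∑ i, x i ^ 2 :=
    sum_filter_of_ne fun i _ h ↦ by simpa using h
  calc 1 = (∑ i ∈ weightSupport x, x i) ^ 2 := by
        rw [weightSupport, sum_filter_ne_zero, hx, one_pow]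
    _ ≤ #(weightSupport x) * ∑ i ∈ weightSupport x, x i ^ 2 := sq_sum_le_card_mul_sum_sq
    _ = #(weightSupport x) * ∑ i, x i ^ 2 := by rw [hsq]

lemma lagEval_le_of_card_weightSupport_le {E : Finset (Finset (Fin n))}
    (hE : ∀ e ∈ E, #e = 2) {x : Fin n → ℝ} (hx : IsLegal x) {t : ℕ}
    (ht : #(weightSupport x) ≤ t) :
    lagEval E x ≤ 1 / 2 * (1 - 1 / (t : ℝ)) := by
  have hlag := two_mul_lagEval_le hE hx.1
  have hsq := one_le_card_weightSupport_mul_sum_sq hx.2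
  have hpos : (0 : ℝ) < #(weightSupport x) :=
    (Nat.cast_nonneg _).lt_of_ne fun h ↦ by rw [← h, zero_mul] at hsq; linarith
  have hinv : 1 / (t : ℝ) ≤ ∑ i, x i ^ 2 :=
    calc 1 / (t : ℝ) ≤ 1 / #(weightSupport x) :=
          one_div_le_one_div_of_le hpos (by exact_mod_cast ht)
      _ ≤ ∑ i, x i ^ 2 := by rwa [div_le_iff₀ hpos, mul_comm]
  rw [hx.2] at hlag
  linarith

def moveWeight (x : Fin n → ℝ) (j i : Fin n) : Fin n → ℝ :=
  x + Pi.single i (x j) - Pi.single j (x j)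

/-- The partial derivative `∂ lagEval E x / ∂ x i`. -/
noncomputable def lagPartial (E : Finset (Finset (Fin n))) (x : Fin n → ℝ) (i : Fin n) : ℝ :=
  ∑ e ∈ E with i ∈ e, ∏ k ∈ e.erase i, x k

section moveWeight

variable {x : Fin n → ℝ} {i j : Fin n}

lemma moveWeight_apply_left (hij : i ≠ j) : moveWeight x j i i = x i + x j := by
  simp [moveWeight, hij]

lemma moveWeight_apply_right (hij : i ≠ j) : moveWeight x j i j = 0 := by
  simp [moveWeight, hij.symm]

lemma moveWeight_apply_of_ne {k : Fin n} (hki : k ≠ i) (hkj : k ≠ j) :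
    moveWeight x j i k = x k := by
  simp [moveWeight, hki, hkj]

lemma IsLegal.moveWeight (hx : IsLegal x) : IsLegal (moveWeight x j i) := by
  refine ⟨fun k ↦ ?_, ?_⟩
  · have := hx.1 k
    have := hx.1 j
    simp only [_root_.moveWeight, Pi.sub_apply, Pi.add_apply, Pi.single_apply]
    split_ifs <;> subst_vars <;> linarith
  · simp [_root_.moveWeight, sum_add_distrib, sum_sub_distrib, hx.2]

lemma weightSupport_moveWeight_subset (hij : i ≠ j) (hi : x i ≠ 0) :
    weightSupport (moveWeight x j i) ⊆ (weightSupport x).erase j := by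
  intro k hk
  simp only [weightSupport, mem_filter, mem_univ, true_and, mem_erase] at hk ⊢
  rcases eq_or_ne k j with rfl | hkj
  · exact absurd (moveWeight_apply_right hij) hk
  rcases eq_or_ne k i with rfl | hki
  · exact ⟨hkj, hi⟩
  · rw [moveWeight_apply_of_ne hki hkj] at hk
    exact ⟨hkj, hk⟩

variable {E : Finset (Finset (Fin n))}

lemma prod_moveWeight (hij : i ≠ j) {e : Finset (Fin n)} (he : ¬(i ∈ e ∧ j ∈ e)) :
    ∏ k ∈ e, moveWeight x j i k = ∏ k ∈ e, x k + x j *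
      ((if i ∈ e then ∏ k ∈ e.erase i, x k else 0) - if j ∈ e then ∏ k ∈ e.erase j, x k else 0) := by
  by_cases hi : i ∈ e
  · have hj : j ∉ e := fun hj ↦ he ⟨hi, hj⟩
    have hrest : ∏ k ∈ e.erase i, moveWeight x j i k = ∏ k ∈ e.erase i, x k :=
      prod_congr rfl fun k hk ↦ moveWeight_apply_of_ne (ne_of_mem_erase hk)
        (fun h ↦ hj (h ▸ mem_of_mem_erase hk))
    rw [← mul_prod_erase e _ hi, ← mul_prod_erase e x hi, hrest, moveWeight_apply_left hij,
      if_pos hi, if_neg hj]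
    ring
  by_cases hj : j ∈ e
  · rw [prod_eq_zero hj (moveWeight_apply_right hij), ← mul_prod_erase e x hj, if_neg hi,
      if_pos hj]
    ring
  · rw [if_neg hi, if_neg hj, sub_zero, mul_zero, add_zero]
    exact prod_congr rfl fun k hk ↦
      moveWeight_apply_of_ne (fun h ↦ hi (h ▸ hk)) (fun h ↦ hj (h ▸ hk))

lemma lagEval_moveWeight (hij : i ≠ j) (hE : ∀ e ∈ E, ¬(i ∈ e ∧ j ∈ e)) :
    lagEval E (moveWeight x j i) = lagEval E x + x j * (lagPartial E x i - lagPartial E x j) := by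
  rw [lagEval, lagEval, lagPartial, lagPartial, sum_filter, sum_filter, ← sum_sub_distrib,
    mul_sum, ← sum_add_distrib]
  exact sum_congr rfl fun e he ↦ prod_moveWeight hij (hE e he)

lemma exists_card_weightSupport_lt_lagEval_le (hx : IsLegal x) (hij : i ≠ j) (hi : x i ≠ 0)
    (hj : x j ≠ 0) (hE : ∀ e ∈ E, ¬(i ∈ e ∧ j ∈ e)) :
    ∃ y, IsLegal y ∧ #(weightSupport y) < #(weightSupport x) ∧ lagEval E x ≤ lagEval E y := by
  wlog hle : lagPartial E x j ≤ lagPartial E x i generalizing i j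
  · exact this hij.symm hj hi (fun e he h ↦ hE e he h.symm) (le_of_not_ge hle)
  refine ⟨moveWeight x j i, hx.moveWeight, ?_, ?_⟩
  · calc #(weightSupport (moveWeight x j i)) ≤ #((weightSupport x).erase j) :=
          card_le_card (weightSupport_moveWeight_subset hij hi)
      _ < #(weightSupport x) := card_erase_lt_of_mem (by simpa [weightSupport] using hj)
  · rw [lagEval_moveWeight hij hE]
    exact le_add_of_nonneg_right (mul_nonneg (hx.1 j) (sub_nonneg.2 hle))

end moveWeight

lemma exists_isClique_weightSupport_lagEval_le {E : Finset (Finset (Fin n))}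
    (hE : ∀ e ∈ E, #e = 2) {x : Fin n → ℝ} (hx : IsLegal x) :
    ∃ y, IsLegal y ∧ IsClique' E (weightSupport y) ∧ lagEval E x ≤ lagEval E y := by
  induction hN : #(weightSupport x) using Nat.strong_induction_on generalizing x with
  | _ N ih =>
  by_cases hcl : IsClique' E (weightSupport x)
  · exact ⟨x, hx, hcl, le_rfl⟩
  simp only [IsClique', not_forall] at hcl
  obtain ⟨i, hi, j, hj, hij, hnE⟩ := hcl
  simp only [weightSupport, mem_filter, mem_univ, true_and] at hi hj
  obtain ⟨y, hy, hlt, hxy⟩ := exists_card_weightSupport_lt_lagEval_le hx hij hi hj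
    fun e he h ↦ notMem_of_pair_notMem hE hij hnE he h.1 h.2
  obtain ⟨z, hz, hcl, hyz⟩ := ih _ (hN ▸ hlt) hy rfl
  exact ⟨z, hz, hcl, hxy.trans hyz⟩

lemma lagEval_le_of_forall_isClique_card_le {E : Finset (Finset (Fin n))}
    (hE : ∀ e ∈ E, #e = 2) {t : ℕ} (hmax : ∀ s, IsClique' E s → #s ≤ t) {x : Fin n → ℝ}
    (hx : IsLegal x) :
    lagEval E x ≤ 1 / 2 * (1 - 1 / (t : ℝ)) := by
  obtain ⟨y, hy, hcl, hxy⟩ := exists_isClique_weightSupport_lagEval_le hE hx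
  exact hxy.trans (lagEval_le_of_card_weightSupport_le hE hy (hmax _ hcl))

noncomputable def uniformWeight (s : Finset (Fin n)) : Fin n → ℝ :=
  fun i ↦ if i ∈ s then (#s : ℝ)⁻¹ else 0

lemma isLegal_uniformWeight {s : Finset (Fin n)} (hs : s.Nonempty) :
    IsLegal (uniformWeight s) := by
  refine ⟨fun i ↦ ?_, ?_⟩
  · unfold uniformWeight
    split_ifs <;> positivity
  · have : (#s : ℝ) ≠ 0 := by exact_mod_cast hs.card_pos.ne'
    simp [uniformWeight, this]

lemma le_lagEval_uniformWeight {E : Finset (Finset (Fin n))} {s : Finset (Fin n)}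
    (hs : IsClique' E s) (hne : s.Nonempty) :
    1 / 2 * (1 - 1 / (#s : ℝ)) ≤ lagEval E (uniformWeight s) := by
  have hpos : (0 : ℝ) < #s := by exact_mod_cast hne.card_pos
  have hw : ∀ i ∈ s, uniformWeight s i = (#s : ℝ)⁻¹ := fun i hi ↦ if_pos hi
  have hsum : ∑ i ∈ s, uniformWeight s i = 1 := by
    rw [sum_congr rfl hw, sum_const, nsmul_eq_mul, mul_inv_cancel₀ hpos.ne']
  have hsq : ∑ i ∈ s, uniformWeight s i ^ 2 = 1 / #s := by
    rw [sum_congr rfl fun i hi ↦ by rw [hw i hi], sum_const, nsmul_eq_mul]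
    field_simp
  have hpairs := two_mul_sum_powersetCard_two_prod s (uniformWeight s)
  rw [hsum, hsq] at hpairs
  linarith [sum_powersetCard_two_le_lagEval hs (isLegal_uniformWeight hne).1]

/-- Motzkin–Straus: if the largest clique of a 2-graph `G` has order `t`, then
`λ(G) = (1/2)(1 - 1/t)`. -/
theorem motzkin_straus {n t : ℕ} (E : Finset (Finset (Fin n)))
    (hE : ∀ e ∈ E, e.card = 2) (ht : 1 ≤ t)
    (hclique : ∃ s, IsClique' E s ∧ s.card = t)
    (hmax : ∀ s, IsClique' E s → s.card ≤ t) :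
    lagrangian E = (1 / 2) * (1 - 1 / (t : ℝ)) := by
  obtain ⟨s, hs, rfl⟩ := hclique
  have hne : s.Nonempty := card_pos.1 ht
  refine IsGreatest.csSup_eq ⟨⟨uniformWeight s, isLegal_uniformWeight hne, ?_⟩, ?_⟩
  · exact le_antisymm (lagEval_le_of_forall_isClique_card_le hE hmax (isLegal_uniformWeight hne))
      (le_lagEval_uniformWeight hs hne)
  · rintro _ ⟨x, hx, rfl⟩
    exact lagEval_le_of_forall_isClique_card_le hE hmax hx
end

section
/- Let G be a left-compressed r-uniform hypergraph on [n] and let x be an optimal weighting with k nonzero weights satisfying the minimality condition. Then for all 1 ≤ i < j ≤ k, (x_i − x_j)·λ(E_{ij}, x) = λ(E_{i\j}, x), where E_{ij} = {B ∈ [n]^(r−2) : B ∪ {i,j} ∈ E(G)} and E_{i\j} = E_i ∩ E_j^c. -/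
/-!
Moving weight `ε` from `i` to `j` changes `λ(E, x)` by
`ε ((x_i - x_j) λ(E_{ij}, x) - λ(L_i, x) + λ(L_j, x)) - ε² λ(E_{ij}, x)`, where `L_i` (resp. `L_j`)
is the link of `i` (resp. `j`) in the edges avoiding the other vertex. As `x_i, x_j > 0`, small
transfers in both directions are legal, so optimality kills the linear coefficient.
Left-compression gives `L_j ⊆ L_i` with `L_i \ L_j = E_{i\j}`.
-/

open Finset

/-- `E` is left-compressed: whenever the increasing enumeration of `f` is pointwise at most
that of an edge `e`, `f` is also an edge. -/
def LeftCompressed {n : ℕ} (E : Finset (Finset (Fin n))) : Prop :=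
  ∀ e ∈ E, ∀ f : Finset (Fin n),
    List.Forall₂ (· ≤ ·) (f.sort (· ≤ ·)) (e.sort (· ≤ ·)) → f ∈ E

section SortInsert

variable {α : Type*} [LinearOrder α]

lemma List.forall₂_cons_orderedInsert (j : α) :
    ∀ (l : List α) (c : α), (c :: l).Pairwise (· ≤ ·) → c ≤ j →
      List.Forall₂ (· ≤ ·) (c :: l) (l.orderedInsert (· ≤ ·) j)
  | [], c, _, hcj => by simpa using hcj
  | b :: l', c, hs, hcj => by
    obtain ⟨hc, hs'⟩ := List.pairwise_cons.1 hs
    by_cases h : j ≤ b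
    · rw [List.orderedInsert_cons_of_le _ _ h]
      exact .cons hcj (List.forall₂_same.2 fun _ _ => le_rfl)
    · simp only [List.orderedInsert, if_neg h]
      exact .cons (hc b (by simp)) (forall₂_cons_orderedInsert j l' b hs' (le_of_not_ge h))

lemma List.forall₂_orderedInsert_orderedInsert {i j : α} (hij : i ≤ j) :
    ∀ l : List α, l.Pairwise (· ≤ ·) →
      List.Forall₂ (· ≤ ·) (l.orderedInsert (· ≤ ·) i) (l.orderedInsert (· ≤ ·) j)
  | [], _ => by simpa using hij
  | a :: l', hs => by
    by_cases hia : i ≤ a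
    · rw [List.orderedInsert_cons_of_le _ _ hia]
      by_cases hja : j ≤ a
      · rw [List.orderedInsert_cons_of_le _ _ hja]
        exact .cons hij (List.forall₂_same.2 fun _ _ => le_rfl)
      · simp only [List.orderedInsert, if_neg hja]
        exact .cons hia (forall₂_cons_orderedInsert j l' a hs (le_of_not_ge hja))
    · have hja : ¬ j ≤ a := fun h => hia (hij.trans h)
      simp only [List.orderedInsert, if_neg hia, if_neg hja]
      exact .cons le_rfl
        (forall₂_orderedInsert_orderedInsert hij l' (List.pairwise_cons.1 hs).2)

lemma Finset.sort_insert_eq_orderedInsert {i : α} {A : Finset α} (h : i ∉ A) :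
    (insert i A).sort (· ≤ ·) = (A.sort (· ≤ ·)).orderedInsert (· ≤ ·) i := by
  refine List.Perm.eq_of_pairwise' (pairwise_sort _ _)
    ((pairwise_sort _ _).orderedInsert _ _) ?_
  exact ((sort_perm_toList _ _).trans ((toList_insert h).trans
    ((sort_perm_toList _ _).symm.cons i))).trans (List.perm_orderedInsert _ _ _).symm

lemma Finset.forall₂_sort_insert_sort_insert {i j : α} (hij : i ≤ j) {A : Finset α}
    (hi : i ∉ A) (hj : j ∉ A) :
    List.Forall₂ (· ≤ ·) ((insert i A).sort (· ≤ ·)) ((insert j A).sort (· ≤ ·)) := by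
  rw [sort_insert_eq_orderedInsert hi, sort_insert_eq_orderedInsert hj]
  exact List.forall₂_orderedInsert_orderedInsert hij _ (pairwise_sort _ _)

end SortInsert

lemma eq_zero_of_isLocalMax_quadratic {a b c : ℝ}
    (h : IsLocalMax (fun ε => a + b * ε + c * ε ^ 2) 0) : b = 0 := by
  simpa using h.hasDerivAt_eq_zero
    ((((hasDerivAt_id' (x := (0 : ℝ))).const_mul b).const_add a).fun_add
      ((hasDerivAt_pow 2 (0 : ℝ)).const_mul c))

lemma Finset.card_eq_sub_one_of_mem_memberSubfamily {α : Type*} [DecidableEq α]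
    {E : Finset (Finset α)} {r : ℕ} (hE : ∀ e ∈ E, #e = r) {a : α} {s : Finset α}
    (hs : s ∈ E.memberSubfamily a) : #s = r - 1 := by
  rw [mem_memberSubfamily] at hs
  have := hE _ hs.1
  rw [card_insert_of_notMem hs.2] at this
  omega

section Links

variable {α : Type*} [Fintype α] [DecidableEq α] {E : Finset (Finset α)} {r : ℕ}

lemma filter_powersetCard_eq_memberSubfamily_memberSubfamily (hE : ∀ e ∈ E, #e = r)
    {i j : α} (hij : i ≠ j) :
    (univ.powersetCard (r - 2)).filter (fun B => i ∉ B ∧ j ∉ B ∧ insert i (insert j B) ∈ E)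
      = (E.memberSubfamily i).memberSubfamily j := by
  ext B
  have hcard : B ∈ (E.memberSubfamily i).memberSubfamily j → #B = r - 2 := fun hB => by
    rw [card_eq_sub_one_of_mem_memberSubfamily
      (fun _ => card_eq_sub_one_of_mem_memberSubfamily hE) hB]
    omega
  simp only [mem_filter, mem_powersetCard, mem_memberSubfamily, mem_insert, not_or]
  constructor
  · rintro ⟨-, hi, hj, hB⟩
    exact ⟨⟨hB, hij, hi⟩, hj⟩
  · rintro ⟨⟨hB, -, hi⟩, hj⟩
    exact ⟨⟨subset_univ B, hcard (by simp [hB, hij, hi, hj])⟩, hi, hj, hB⟩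

lemma filter_powersetCard_eq_filter_memberSubfamily_nonMemberSubfamily
    (hE : ∀ e ∈ E, #e = r) (i j : α) :
    (univ.powersetCard (r - 1)).filter
        (fun A => i ∉ A ∧ j ∉ A ∧ insert i A ∈ E ∧ insert j A ∉ E)
      = ((E.memberSubfamily i).nonMemberSubfamily j).filter (insert j · ∉ E) := by
  ext A
  simp only [mem_filter, mem_powersetCard, mem_nonMemberSubfamily, mem_memberSubfamily]
  constructor
  · rintro ⟨-, hi, hj, hA, hjA⟩
    exact ⟨⟨⟨hA, hi⟩, hj⟩, hjA⟩
  · rintro ⟨⟨⟨hA, hi⟩, hj⟩, hjA⟩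
    exact ⟨⟨subset_univ A, card_eq_sub_one_of_mem_memberSubfamily hE
      (mem_memberSubfamily.2 ⟨hA, hi⟩)⟩, hi, hj, hA, hjA⟩

end Links

variable {n : ℕ}

lemma lagEval_congr {F : Finset (Finset (Fin n))} {x y : Fin n → ℝ}
    (h : ∀ e ∈ F, ∀ v ∈ e, x v = y v) : lagEval F x = lagEval F y :=
  sum_congr rfl fun e he => prod_congr rfl (h e he)

lemma lagEval_le_card {E : Finset (Finset (Fin n))} {x : Fin n → ℝ} (hx : IsLegal x) :
    lagEval E x ≤ #E := by
  have hle : ∀ v, x v ≤ 1 := fun v =>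
    hx.2 ▸ single_le_sum (fun w _ => hx.1 w) (mem_univ v)
  simpa [lagEval] using
    sum_le_sum fun e (_ : e ∈ E) => prod_le_one (fun v _ => hx.1 v) fun v _ => hle v

lemma lagEval_le_lagrangian {E : Finset (Finset (Fin n))} {x : Fin n → ℝ} (hx : IsLegal x) :
    lagEval E x ≤ lagrangian E :=
  le_csSup ⟨#E, by rintro _ ⟨y, hy, rfl⟩; exact lagEval_le_card hy⟩ ⟨x, hx, rfl⟩

lemma lagEval_eq_mul_memberSubfamily_add (E : Finset (Finset (Fin n))) (x : Fin n → ℝ)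
    (i : Fin n) :
    lagEval E x = x i * lagEval (E.memberSubfamily i) x + lagEval (E.nonMemberSubfamily i) x := by
  rw [lagEval, ← sum_filter_add_sum_filter_not E (i ∈ ·), lagEval, memberSubfamily,
    sum_image, mul_sum]
  · congr 1
    exact sum_congr rfl fun e he => (mul_prod_erase e x (mem_filter.1 he).2).symm
  · exact fun e he f hf => erase_injOn' i (mem_filter.1 he).2 (mem_filter.1 hf).2

lemma lagEval_eq_expand_pair (E : Finset (Finset (Fin n))) {x z : Fin n → ℝ}
    {i j : Fin n} (hij : i ≠ j) (hz : ∀ v, v ≠ i → v ≠ j → z v = x v) :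
    lagEval E z = z i * z j * lagEval ((E.memberSubfamily i).memberSubfamily j) x
      + z i * lagEval ((E.memberSubfamily i).nonMemberSubfamily j) x
      + z j * lagEval ((E.nonMemberSubfamily i).memberSubfamily j) x
      + lagEval ((E.nonMemberSubfamily i).nonMemberSubfamily j) x := by
  have avoid : ∀ F : Finset (Finset (Fin n)), (∀ s ∈ F, i ∉ s ∧ j ∉ s) →
      lagEval F z = lagEval F x := fun F hF => lagEval_congr fun s hs v hv =>
    hz v (ne_of_mem_of_not_mem hv (hF s hs).1) (ne_of_mem_of_not_mem hv (hF s hs).2)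
  rw [lagEval_eq_mul_memberSubfamily_add E z i,
    lagEval_eq_mul_memberSubfamily_add (E.memberSubfamily i) z j,
    lagEval_eq_mul_memberSubfamily_add (E.nonMemberSubfamily i) z j, avoid, avoid, avoid, avoid]
  · ring
  all_goals intro s hs; simp_all [mem_insert]

def transfer (x : Fin n → ℝ) (i j : Fin n) (ε : ℝ) : Fin n → ℝ :=
  x + ε • (Pi.single j 1 - Pi.single i 1)

section Transfer

variable (x : Fin n → ℝ) {i j : Fin n} (ε : ℝ)

lemma transfer_apply_left (hij : i ≠ j) : transfer x i j ε i = x i - ε := by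
  simp [transfer, hij, sub_eq_add_neg]

lemma transfer_apply_right (hij : i ≠ j) : transfer x i j ε j = x j + ε := by
  simp [transfer, hij.symm]

lemma transfer_apply_of_ne {v : Fin n} (hvi : v ≠ i) (hvj : v ≠ j) :
    transfer x i j ε v = x v := by
  simp [transfer, hvi, hvj]

lemma IsLegal.transfer {x : Fin n → ℝ} (hx : IsLegal x) (hij : i ≠ j) {ε : ℝ}
    (hi : ε ≤ x i) (hj : -x j ≤ ε) : IsLegal (transfer x i j ε) := by
  refine ⟨fun v => ?_, ?_⟩
  · rcases eq_or_ne v i with rfl | hvi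
    · rw [transfer_apply_left x ε hij]; linarith
    rcases eq_or_ne v j with rfl | hvj
    · rw [transfer_apply_right x ε hij]; linarith
    exact transfer_apply_of_ne x ε hvi hvj ▸ hx.1 v
  · simp [_root_.transfer, sum_add_distrib, ← mul_sum, hx.2]

end Transfer

lemma LeftCompressed.insert_mem {E : Finset (Finset (Fin n))} (hlc : LeftCompressed E)
    {i j : Fin n} (hij : i ≤ j) {A : Finset (Fin n)} (hi : i ∉ A) (hj : j ∉ A)
    (h : insert j A ∈ E) : insert i A ∈ E :=
  hlc _ h _ (forall₂_sort_insert_sort_insert hij hi hj)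

lemma LeftCompressed.lagEval_memberSubfamily_nonMemberSubfamily {E : Finset (Finset (Fin n))}
    (hlc : LeftCompressed E) {i j : Fin n} (hij : i < j) (x : Fin n → ℝ) :
    lagEval ((E.memberSubfamily i).nonMemberSubfamily j) x
      = lagEval ((E.nonMemberSubfamily i).memberSubfamily j) x
        + lagEval (((E.memberSubfamily i).nonMemberSubfamily j).filter
            (insert j · ∉ E)) x := by
  rw [lagEval, ← sum_filter_add_sum_filter_not _ (insert j · ∈ E)]
  congr 1
  refine sum_congr (ext fun A => ?_) fun _ _ => rfl
  simp only [mem_filter, mem_nonMemberSubfamily, mem_memberSubfamily, mem_insert, not_or]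
  constructor
  · rintro ⟨⟨⟨-, hi⟩, hj⟩, hjA⟩
    exact ⟨⟨hjA, hij.ne, hi⟩, hj⟩
  · rintro ⟨⟨hjA, -, hi⟩, hj⟩
    exact ⟨⟨⟨hlc.insert_mem hij.le hi hj hjA, hi⟩, hj⟩, hjA⟩

lemma sub_mul_lagEval_eq_of_forall_legal_le {E : Finset (Finset (Fin n))} {x : Fin n → ℝ}
    (hx : IsLegal x) (hmax : ∀ y, IsLegal y → lagEval E y ≤ lagEval E x) {i j : Fin n}
    (hij : i ≠ j) (hxi : 0 < x i) (hxj : 0 < x j) :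
    (x i - x j) * lagEval ((E.memberSubfamily i).memberSubfamily j) x
      = lagEval ((E.memberSubfamily i).nonMemberSubfamily j) x
        - lagEval ((E.nonMemberSubfamily i).memberSubfamily j) x := by
  set P := lagEval ((E.memberSubfamily i).memberSubfamily j) x
  set Qi := lagEval ((E.memberSubfamily i).nonMemberSubfamily j) x
  set Qj := lagEval ((E.nonMemberSubfamily i).memberSubfamily j) x
  have hquad : ∀ ε, lagEval E (transfer x i j ε)
      = lagEval E x + ((x i - x j) * P - Qi + Qj) * ε + -P * ε ^ 2 := by
    intro ε
    rw [lagEval_eq_expand_pair E hij fun v => transfer_apply_of_ne x ε,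
      lagEval_eq_expand_pair E hij (z := x) fun _ _ _ => rfl,
      transfer_apply_left x ε hij, transfer_apply_right x ε hij]
    ring
  have hloc : IsLocalMax (fun ε => lagEval E (transfer x i j ε)) 0 := by
    filter_upwards [Metric.ball_mem_nhds (0 : ℝ) (lt_min hxi hxj)] with ε hε
    rw [Metric.mem_ball, Real.dist_0_eq_abs, lt_min_iff, abs_lt, abs_lt] at hε
    simpa only [transfer, zero_smul, add_zero] using
      hmax _ (hx.transfer hij (by linarith) (by linarith))
  rw [funext hquad] at hloc
  linarith [eq_zero_of_isLocalMax_quadratic hloc]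

theorem left_compressed_weight_diff_general {n r : ℕ} (E : Finset (Finset (Fin n)))
    (hE : ∀ e ∈ E, e.card = r) (hlc : LeftCompressed E)
    (x : Fin n → ℝ) (hx : IsLegal x) (hopt : lagEval E x = lagrangian E) :
    ∀ i j : Fin n, i < j → x i ≠ 0 → x j ≠ 0 →
      (x i - x j) *
        lagEval ((univ.powersetCard (r - 2)).filter
          (fun B => i ∉ B ∧ j ∉ B ∧ insert i (insert j B) ∈ E)) x
      = lagEval ((univ.powersetCard (r - 1)).filter
          (fun A => i ∉ A ∧ j ∉ A ∧ insert i A ∈ E ∧ insert j A ∉ E)) x := by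
  intro i j hij hxi hxj
  have hmax : ∀ y, IsLegal y → lagEval E y ≤ lagEval E x :=
    fun y hy => hopt ▸ lagEval_le_lagrangian hy
  rw [filter_powersetCard_eq_memberSubfamily_memberSubfamily hE hij.ne,
    filter_powersetCard_eq_filter_memberSubfamily_nonMemberSubfamily hE,
    sub_mul_lagEval_eq_of_forall_legal_le hx hmax hij.ne ((hx.1 i).lt_of_ne' hxi)
      ((hx.1 j).lt_of_ne' hxj),
    hlc.lagEval_memberSubfamily_nonMemberSubfamily hij]
  ring

/-- For a left-compressed `G` with optimal weighting `x` of minimal support: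
`(x_i − x_j) · λ(E_{ij}, x) = λ(E_{i\j}, x)` for supported `i < j`. -/
theorem left_compressed_weight_diff {n r : ℕ} (E : Finset (Finset (Fin n)))
    (hE : ∀ e ∈ E, e.card = r) (hlc : LeftCompressed E)
    (x : Fin n → ℝ) (hx : IsLegal x) (hopt : lagEval E x = lagrangian E)
    (hmin : ∀ y : Fin n → ℝ, IsLegal y →
      (univ.filter (fun i => y i ≠ 0)).card < (univ.filter (fun i => x i ≠ 0)).card →
      lagEval E y < lagrangian E) :
    ∀ i j : Fin n, i < j → x i ≠ 0 → x j ≠ 0 →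
      (x i - x j) *
        lagEval ((univ.powersetCard (r - 2)).filter
          (fun B => i ∉ B ∧ j ∉ B ∧ insert i (insert j B) ∈ E)) x
      = lagEval ((univ.powersetCard (r - 1)).filter
          (fun A => i ∉ A ∧ j ∉ A ∧ insert i A ∈ E ∧ insert j A ∉ E)) x :=
  left_compressed_weight_diff_general E hE hlc x hx hopt
end

section
/- For positive integers m, t, r with m ≤ C(t,r) − 1, there exists a left-compressed r-uniform hypergraph G with m edges such that λ(G) = λ_m^r, the maximum Lagrangian over all r-graphs with m edges. -/
/-!
Shifting a vertex `j` of an edge to a smaller vertex `i` (the UV-compression with `u = {i}`,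
`v = {j}`) never decreases the Lagrangian: moving the larger of the weights at `i` and `j` onto
`i` makes every edge weigh at least as much, except for an edge whose shift is blocked by an edge
already present, and such a pair of edges keeps its total weight. A nontrivial shift strictly
lowers the sum of all vertices of all edges, so repeated shifting ends in a shift-closed family
with the same number of edges and no smaller Lagrangian, and shift-closed families are
left-compressed. A shift-closed `r`-graph with `m` edges has all its vertices below `m + r`, so
there are finitely many of them; the one of largest Lagrangian is extremal.
-/

open Finset

/-- The evaluation of the Lagrangian polynomial of a hypergraph on ℕ at a weighting `x`. -/
noncomputable def lagEvalN (E : Finset (Finset ℕ)) (x : ℕ → ℝ) : ℝ :=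
  ∑ e ∈ E, ∏ i ∈ e, x i

/-- A legal weighting on ℕ: nonnegative, finitely supported, summing to 1. -/
def IsLegalN (x : ℕ → ℝ) : Prop :=
  (∀ i, 0 ≤ x i) ∧ ∃ s : Finset ℕ, (∀ i ∉ s, x i = 0) ∧ ∑ i ∈ s, x i = 1

/-- The Lagrangian of a hypergraph on ℕ. -/
noncomputable def lagrangianN (E : Finset (Finset ℕ)) : ℝ :=
  sSup {v | ∃ x, IsLegalN x ∧ lagEvalN E x = v}

/-- `E` is left-compressed: whenever the increasing enumeration of `f` is pointwise at most
that of an edge `e`, `f` is also an edge. -/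
def LeftCompressedN (E : Finset (Finset ℕ)) : Prop :=
  ∀ e ∈ E, ∀ f : Finset ℕ,
    List.Forall₂ (· ≤ ·) (f.sort (· ≤ ·)) (e.sort (· ≤ ·)) → f ∈ E

open scoped FinsetFamily
open UV

-- A counting form of the order in `LeftCompressedN`, which is easier to follow along single shifts.
def TailCountLe (f e : Finset ℕ) : Prop :=
  ∀ c, #{x ∈ f | c ≤ x} ≤ #{x ∈ e | c ≤ x}

lemma List.Forall₂.countP_le {α : Type*} [LinearOrder α] {l₁ l₂ : List α}
    (h : List.Forall₂ (· ≤ ·) l₁ l₂) (c : α) :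
    l₁.countP (c ≤ ·) ≤ l₂.countP (c ≤ ·) := by
  induction h with
  | nil => rfl
  | @cons a b _ _ hab _ ih =>
    simp only [List.countP_cons]
    have : c ≤ a → c ≤ b := (le_trans · hab)
    split_ifs <;> grind

lemma Finset.card_filter_eq_countP_sort {α : Type*} [LinearOrder α] (s : Finset α)
    (p : α → Prop) [DecidablePred p] :
    #{x ∈ s | p x} = (s.sort (· ≤ ·)).countP p := by
  rw [← Multiset.coe_countP, sort_eq, Multiset.countP_eq_card_filter]
  rfl

lemma tailCountLe_of_forall₂_sort {f e : Finset ℕ}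
    (h : List.Forall₂ (· ≤ ·) (f.sort (· ≤ ·)) (e.sort (· ≤ ·))) : TailCountLe f e := by
  intro c
  rw [card_filter_eq_countP_sort, card_filter_eq_countP_sort]
  exact h.countP_le c

lemma UV.compress_singleton {α : Type*} [DecidableEq α] {i j : α} {a : Finset α} (hij : i ≠ j)
    (hj : j ∈ a) (hi : i ∉ a) :
    compress {i} {j} a = insert i (a.erase j) := by
  rw [compress_of_disjoint_of_le (by simpa) (by simpa)]
  ext k
  simp only [sup_eq_union, mem_sdiff, mem_union, mem_singleton, mem_insert, mem_erase]
  grind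

lemma UV.disjoint_and_le_of_compress_ne {α : Type*} [GeneralizedBooleanAlgebra α]
    [DecidableRel (@Disjoint α _ _)] [DecidableLE α] {u v a : α} (h : compress u v a ≠ a) :
    Disjoint u a ∧ v ≤ a := by
  by_contra h'
  exact h (if_neg h')

lemma UV.mem_and_notMem_of_compress_singleton_ne {α : Type*} [DecidableEq α] {i j : α}
    {a : Finset α}
    (h : compress {i} {j} a ≠ a) : j ∈ a ∧ i ∉ a := by
  simpa [and_comm] using disjoint_and_le_of_compress_ne h

lemma sum_insert_erase_add {i j : ℕ} {a : Finset ℕ} (hj : j ∈ a) (hi : i ∉ a) :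
    ∑ v ∈ insert i (a.erase j), v + j = ∑ v ∈ a, v + i := by
  rw [sum_insert (mt mem_of_mem_erase hi), ← add_sum_erase a _ hj]
  ring

lemma UV.sum_compress_singleton_le {i j : ℕ} (hij : i < j) (a : Finset ℕ) :
    ∑ v ∈ compress {i} {j} a, v ≤ ∑ v ∈ a, v := by
  by_cases h : compress {i} {j} a = a
  · rw [h]
  · obtain ⟨hj, hi⟩ := mem_and_notMem_of_compress_singleton_ne h
    have := sum_insert_erase_add hj hi
    rw [compress_singleton hij.ne hj hi]
    omega

def ShiftClosed (E : Finset (Finset ℕ)) : Prop :=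
  ∀ e ∈ E, ∀ i j, i < j → compress {i} {j} e ∈ E

lemma max_sdiff_lt_max_sdiff {f e : Finset ℕ} (hfe : TailCountLe f e) (hef : (e \ f).Nonempty)
    (hfe' : (f \ e).Nonempty) : (f \ e).max' hfe' < (e \ f).max' hef := by
  obtain ⟨hif, hie⟩ := mem_sdiff.1 ((f \ e).max'_mem hfe')
  have hje := (mem_sdiff.1 ((e \ f).max'_mem hef)).1
  set i := (f \ e).max' hfe'
  set j := (e \ f).max' hef
  by_contra! hji
  have hsub : {x ∈ e | i ≤ x} ⊂ {x ∈ f | i ≤ x} := by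
    refine ssubset_iff_of_subset (fun x hx => ?_) |>.2 ⟨i, by simp [hif], by simp [hie]⟩
    rw [mem_filter] at hx ⊢
    refine ⟨?_, hx.2⟩
    by_contra hxf
    have := (e \ f).le_max' x (mem_sdiff.2 ⟨hx.1, hxf⟩)
    have : i ≠ j := fun h => hie (h ▸ hje)
    omega
  exact (card_lt_card hsub).not_ge (hfe i)

lemma exists_tailCountLe_insert_erase {f e : Finset ℕ} (hcard : #f = #e) (hfe : TailCountLe f e)
    (hne : f ≠ e) :
    ∃ i j, i < j ∧ j ∈ e ∧ i ∉ e ∧ TailCountLe f (insert i (e.erase j)) := by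
  have hef : (e \ f).Nonempty :=
    sdiff_nonempty.2 fun h => hne (eq_of_subset_of_card_le h hcard.le).symm
  have hfe' : (f \ e).Nonempty :=
    sdiff_nonempty.2 fun h => hne (eq_of_subset_of_card_le h hcard.ge)
  obtain ⟨hif, hie⟩ := mem_sdiff.1 ((f \ e).max'_mem hfe')
  obtain ⟨hje, hjf⟩ := mem_sdiff.1 ((e \ f).max'_mem hef)
  have hij := max_sdiff_lt_max_sdiff hfe hef hfe'
  set i := (f \ e).max' hfe'
  set j := (e \ f).max' hef
  refine ⟨i, j, hij, hje, hie, fun c => ?_⟩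
  by_cases hci : c ≤ i
  · -- both `i` and `j` lie in the tail, so the shift does not change its size
    have hjc : j ∈ {x ∈ e | c ≤ x} := mem_filter.2 ⟨hje, by omega⟩
    rw [filter_insert, if_pos hci, filter_erase, card_insert_of_notMem (by simp [hie]),
      card_erase_of_mem hjc, Nat.sub_add_cancel (card_pos.2 ⟨j, hjc⟩)]
    exact hfe c
  · refine card_le_card fun x hx => ?_
    rw [mem_filter] at hx
    have hxe : x ∈ e := by
      by_contra hxe
      have := (f \ e).le_max' x (mem_sdiff.2 ⟨hx.1, hxe⟩)
      omega
    exact mem_filter.2 ⟨mem_insert_of_mem (mem_erase.2 ⟨fun h => hjf (h ▸ hx.1), hxe⟩), hx.2⟩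

lemma ShiftClosed.mem_of_tailCountLe {E : Finset (Finset ℕ)} (hE : ShiftClosed E) {e f : Finset ℕ}
    (he : e ∈ E) (hcard : #f = #e) (hfe : TailCountLe f e) : f ∈ E := by
  induction hs : ∑ v ∈ e, v using Nat.strong_induction_on generalizing e with
  | _ n ih =>
    by_cases hne : f = e
    · exact hne ▸ he
    obtain ⟨i, j, hij, hje, hie, hfe'⟩ := exists_tailCountLe_insert_erase hcard hfe hne
    have hshift := hE e he i j hij
    rw [compress_singleton hij.ne hje hie] at hshift
    have := sum_insert_erase_add hje hie
    refine ih _ (by omega) hshift ?_ hfe' rfl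
    rw [hcard, card_insert_of_notMem (mt mem_of_mem_erase hie), card_erase_add_one hje]

lemma ShiftClosed.leftCompressedN {E : Finset (Finset ℕ)} (hE : ShiftClosed E) :
    LeftCompressedN E := fun e he f hfe =>
  hE.mem_of_tailCountLe he (by simpa using hfe.length_eq) (tailCountLe_of_forall₂_sort hfe)

lemma ShiftClosed.add_two_le_card_add_card {E : Finset (Finset ℕ)} (hE : ShiftClosed E)
    {e : Finset ℕ} {v : ℕ} (he : e ∈ E) (hv : v ∈ e) : v + 2 ≤ #E + #e := by
  set K := range v \ e
  -- the shifts of `v` down to the vertices of `K` are distinct edges, none equal to `e`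
  have hinj : Set.InjOn (fun k => insert k (e.erase v)) K := fun k₁ hk₁ k₂ _ h => by
    have : k₁ ∈ insert k₂ (e.erase v) := by
      rw [← show insert k₁ (e.erase v) = insert k₂ (e.erase v) from h]
      exact mem_insert_self _ _
    simp only [mem_coe, K, mem_sdiff] at hk₁
    simpa [hk₁.2] using this
  have hsub : insert e (K.image fun k => insert k (e.erase v)) ⊆ E := by
    refine insert_subset he (image_subset_iff.2 fun k hk => ?_)
    simp only [K, mem_sdiff, mem_range] at hk
    simpa [compress_singleton hk.1.ne hv hk.2] using hE e he k v hk.1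
  have hnot : e ∉ K.image fun k => insert k (e.erase v) := by
    simp only [mem_image, not_exists, not_and]
    intro k hk h
    have : v ∈ insert k (e.erase v) := by rwa [h]
    simp [(mem_range.1 (mem_sdiff.1 hk).1).ne'] at this
  have hcover : range (v + 1) ⊆ K ∪ e := fun k hk => by
    by_cases hke : k ∈ e
    · exact mem_union_right _ hke
    · have : k ≠ v := fun h => hke (h ▸ hv)
      exact mem_union_left _ (mem_sdiff.2 ⟨mem_range.2 (by grind), hke⟩)
  have h₁ := card_le_card hsub
  rw [card_insert_of_notMem hnot, card_image_of_injOn hinj] at h₁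
  have h₂ := (card_le_card hcover).trans (card_union_le K e)
  rw [card_range] at h₂
  omega

lemma ShiftClosed.mem_powerset_powerset_range {G : Finset (Finset ℕ)} {r : ℕ}
    (hG : ShiftClosed G) (hGr : (G : Set (Finset ℕ)).Sized r) :
    G ∈ (range (#G + r)).powerset.powerset :=
  mem_powerset.2 fun e he => mem_powerset.2 fun v hv => mem_range.2 <| by
    linarith [hG.add_two_le_card_add_card he hv, hGr he]

lemma UV.sum_compression {α M : Type*} [GeneralizedBooleanAlgebra α]
    [DecidableRel (@Disjoint α _ _)] [DecidableLE α] [DecidableEq α] [AddCommMonoid M]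
    (u v : α) (s : Finset α) (φ : α → M) :
    ∑ a ∈ 𝓒 u v s, φ a = ∑ a ∈ s, if compress u v a ∈ s then φ a else φ (compress u v a) := by
  rw [compression, sum_union compress_disjoint, filter_image, sum_image compress_injOn, sum_ite]

lemma vertexSum_compression_lt {E : Finset (Finset ℕ)} {e : Finset ℕ} {i j : ℕ} (hij : i < j)
    (he : e ∈ E) (hce : compress {i} {j} e ∉ E) :
    ∑ a ∈ 𝓒 {i} {j} E, ∑ v ∈ a, v < ∑ a ∈ E, ∑ v ∈ a, v := by
  rw [sum_compression]
  refine sum_lt_sum (fun a _ => ?_) ⟨e, he, ?_⟩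
  · split_ifs
    exacts [le_rfl, sum_compress_singleton_le hij a]
  · have hne : compress {i} {j} e ≠ e := fun h => hce (h.symm ▸ he)
    obtain ⟨hj, hi⟩ := mem_and_notMem_of_compress_singleton_ne hne
    have := sum_insert_erase_add hj hi
    rw [if_neg hce, compress_singleton hij.ne hj hi]
    omega

lemma Finset.sum_nonneg_of_pairing {ι M : Type*} [DecidableEq ι] [AddCommMonoid M] [PartialOrder M]
    [IsOrderedAddMonoid M] {s t : Finset ι} {g : ι → M} (σ : ι → ι) (hts : t ⊆ s)
    (hσ : Set.InjOn σ t) (hσt : ∀ a ∈ t, σ a ∈ s \ t) (hg : ∀ a ∈ s \ t, 0 ≤ g a)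
    (hpair : ∀ a ∈ t, 0 ≤ g a + g (σ a)) : 0 ≤ ∑ a ∈ s, g a :=
  calc 0 ≤ ∑ a ∈ t, (g a + g (σ a)) := sum_nonneg hpair
    _ = ∑ a ∈ t, g a + ∑ a ∈ t.image σ, g a := by rw [sum_add_distrib, sum_image hσ]
    _ ≤ ∑ a ∈ t, g a + ∑ a ∈ s \ t, g a :=
      add_le_add_right (sum_le_sum_of_subset_of_nonneg (image_subset_iff.2 hσt)
        fun a ha _ => hg a ha) _
    _ = ∑ a ∈ s, g a := by rw [add_comm, sum_sdiff hts]

def maxMinAt (x : ℕ → ℝ) (i j : ℕ) : ℕ → ℝ :=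
  fun k => if k = i then max (x i) (x j) else if k = j then min (x i) (x j) else x k

section maxMinAt

variable {x : ℕ → ℝ} {i j : ℕ}

@[simp] lemma maxMinAt_left : maxMinAt x i j i = max (x i) (x j) := if_pos rfl

@[simp] lemma maxMinAt_right (hij : i ≠ j) : maxMinAt x i j j = min (x i) (x j) := by
  simp [maxMinAt, hij.symm]

lemma maxMinAt_of_ne {k : ℕ} (hi : k ≠ i) (hj : k ≠ j) : maxMinAt x i j k = x k := by
  simp [maxMinAt, hi, hj]

lemma prod_maxMinAt_of_notMem {S : Finset ℕ} (hi : i ∉ S) (hj : j ∉ S) :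
    ∏ k ∈ S, maxMinAt x i j k = ∏ k ∈ S, x k :=
  prod_congr rfl fun _ hk => maxMinAt_of_ne (ne_of_mem_of_not_mem hk hi)
    (ne_of_mem_of_not_mem hk hj)

lemma IsLegalN.maxMinAt (hx : IsLegalN x) (hij : i ≠ j) : IsLegalN (maxMinAt x i j) := by
  obtain ⟨hx0, s, hs0, hs1⟩ := hx
  refine ⟨fun k => ?_, insert i (insert j s), fun k hk => ?_, ?_⟩
  · unfold _root_.maxMinAt
    split_ifs
    exacts [le_max_of_le_left (hx0 i), le_min (hx0 i) (hx0 j), hx0 k]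
  · simp only [mem_insert, not_or] at hk
    rw [maxMinAt_of_ne hk.1 hk.2.1, hs0 k hk.2.2]
  · set S := ((insert i (insert j s)).erase i).erase j
    have hiS : i ∉ S := by simp [S]
    have hjS : j ∉ S := by simp [S]
    have hsplit (z : ℕ → ℝ) : ∑ k ∈ insert i (insert j s), z k = z i + z j + ∑ k ∈ S, z k := by
      rw [← add_sum_erase _ z (mem_insert_self i _),
        ← add_sum_erase _ z (by simp [hij.symm] : j ∈ (insert i (insert j s)).erase i), add_assoc]
    have hsum : ∑ k ∈ insert i (insert j s), x k = 1 := by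
      rw [← hs1]
      exact (sum_subset (fun k hk => mem_insert_of_mem (mem_insert_of_mem hk))
        fun k _ hk => hs0 k hk).symm
    have hS : ∑ k ∈ S, _root_.maxMinAt x i j k = ∑ k ∈ S, x k :=
      sum_congr rfl fun _ hk => maxMinAt_of_ne (ne_of_mem_of_not_mem hk hiS)
        (ne_of_mem_of_not_mem hk hjS)
    rw [hsplit, maxMinAt_left, maxMinAt_right hij, max_add_min, hS, ← hsplit, hsum]

lemma prod_le_prod_compress_maxMinAt (hx : ∀ k, 0 ≤ x k) (hij : i ≠ j) (a : Finset ℕ) :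
    ∏ k ∈ a, x k ≤ ∏ k ∈ compress {i} {j} a, maxMinAt x i j k := by
  have hP (S : Finset ℕ) : 0 ≤ ∏ k ∈ S, x k := prod_nonneg fun k _ => hx k
  by_cases hshift : j ∈ a ∧ i ∉ a
  · obtain ⟨hj, hi⟩ := hshift
    have hi' : i ∉ a.erase j := mt mem_of_mem_erase hi
    rw [compress_singleton hij hj hi, prod_insert hi', ← mul_prod_erase a _ hj,
      prod_maxMinAt_of_notMem hi' (notMem_erase j a), maxMinAt_left]
    exact mul_le_mul_of_nonneg_right (le_max_right _ _) (hP _)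
  rw [compress, if_neg (by simpa [and_comm] using hshift)]
  by_cases hi : i ∈ a
  · rw [← mul_prod_erase a _ hi, ← mul_prod_erase a _ hi]
    by_cases hj : j ∈ a
    · have hi' : i ∉ (a.erase i).erase j := mt mem_of_mem_erase (notMem_erase i a)
      have hj : j ∈ a.erase i := mem_erase.2 ⟨hij.symm, hj⟩
      rw [← mul_prod_erase _ _ hj, ← mul_prod_erase _ _ hj,
        prod_maxMinAt_of_notMem hi' (notMem_erase j _),
        maxMinAt_left, maxMinAt_right hij, ← mul_assoc, ← mul_assoc, max_mul_min]
    · rw [prod_maxMinAt_of_notMem (notMem_erase i a) (mt mem_of_mem_erase hj), maxMinAt_left]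
      exact mul_le_mul_of_nonneg_right (le_max_left _ _) (hP _)
  · exact (prod_maxMinAt_of_notMem hi (by tauto)).ge

lemma prod_add_prod_compress_maxMinAt (hij : i ≠ j) {a : Finset ℕ} (hj : j ∈ a) (hi : i ∉ a) :
    ∏ k ∈ a, maxMinAt x i j k + ∏ k ∈ compress {i} {j} a, maxMinAt x i j k =
      ∏ k ∈ a, x k + ∏ k ∈ compress {i} {j} a, x k := by
  have hi' : i ∉ a.erase j := mt mem_of_mem_erase hi
  rw [compress_singleton hij hj hi, prod_insert hi', prod_insert hi', ← mul_prod_erase a _ hj,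
    ← mul_prod_erase a _ hj, prod_maxMinAt_of_notMem hi' (notMem_erase j a), maxMinAt_left,
    maxMinAt_right hij, ← add_mul, ← add_mul, add_comm (min _ _), max_add_min, add_comm]

end maxMinAt

lemma lagEvalN_le_lagEvalN_compression {x : ℕ → ℝ} {i j : ℕ} (hx : ∀ k, 0 ≤ x k) (hij : i ≠ j)
    (E : Finset (Finset ℕ)) : lagEvalN E x ≤ lagEvalN (𝓒 {i} {j} E) (maxMinAt x i j) := by
  rw [lagEvalN, lagEvalN, sum_compression, ← sub_nonneg, ← sum_sub_distrib]
  -- an edge whose shift is blocked by an edge already present is paired with that edge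
  refine sum_nonneg_of_pairing (compress {i} {j})
    (t := {a ∈ E | compress {i} {j} a ≠ a ∧ compress {i} {j} a ∈ E}) (filter_subset _ _)
    ?_ ?_ ?_ ?_
  · refine (sup_sdiff_injOn {i} {j}).mono (fun a ha => ?_) |>.congr fun a ha => ?_
    all_goals have := disjoint_and_le_of_compress_ne (mem_filter.1 ha).2.1
    · exact this
    · exact (compress_of_disjoint_of_le this.1 this.2).symm
  · intro a ha
    obtain ⟨-, -, hca⟩ := mem_filter.1 ha
    simp [hca]
  · intro a ha
    obtain ⟨haE, hat⟩ := mem_sdiff.1 ha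
    have hfix (h : compress {i} {j} a ∈ E) : compress {i} {j} a = a := by
      by_contra hne
      exact hat (by simp [haE, hne, h])
    rw [sub_nonneg]
    split_ifs with h
    · simpa only [hfix h] using prod_le_prod_compress_maxMinAt hx hij a
    · exact prod_le_prod_compress_maxMinAt hx hij a
  · intro a ha
    obtain ⟨-, hne, hca⟩ := mem_filter.1 ha
    obtain ⟨hj, hi⟩ := mem_and_notMem_of_compress_singleton_ne hne
    simp only [hca, if_true, compress_idem]
    linarith [prod_add_prod_compress_maxMinAt (x := x) hij hj hi]

lemma IsLegalN.le_one {x : ℕ → ℝ} (hx : IsLegalN x) (k : ℕ) : x k ≤ 1 := by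
  obtain ⟨hx0, s, hs0, hs1⟩ := hx
  by_cases hk : k ∈ s
  · exact hs1 ▸ single_le_sum (fun k _ => hx0 k) hk
  · rw [hs0 k hk]
    exact zero_le_one

lemma lagEvalN_le_card {x : ℕ → ℝ} (hx : IsLegalN x) (E : Finset (Finset ℕ)) :
    lagEvalN E x ≤ #E := by
  unfold lagEvalN
  simpa using sum_le_sum fun e (_ : e ∈ E) => prod_le_one (fun k _ => hx.1 k) fun k _ => hx.le_one k

lemma isLegalN_indicator_zero : IsLegalN fun k => if k = 0 then 1 else 0 :=
  ⟨fun k => by positivity, {0}, fun k hk => if_neg (by simpa using hk), by simp⟩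

lemma lagrangianN_le_card (E : Finset (Finset ℕ)) : lagrangianN E ≤ #E :=
  csSup_le ⟨_, _, isLegalN_indicator_zero, rfl⟩ fun _ ⟨_, hx, hv⟩ => hv ▸ lagEvalN_le_card hx E

lemma lagrangianN_le_of_forall_exists {E F : Finset (Finset ℕ)}
    (h : ∀ x, IsLegalN x → ∃ y, IsLegalN y ∧ lagEvalN E x ≤ lagEvalN F y) :
    lagrangianN E ≤ lagrangianN F := by
  refine csSup_le ⟨_, _, isLegalN_indicator_zero, rfl⟩ fun _ ⟨x, hx, hv⟩ => ?_
  obtain ⟨y, hy, hxy⟩ := h x hx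
  exact hv ▸ hxy.trans (le_csSup ⟨#F, fun _ ⟨_, hz, hw⟩ => hw ▸ lagEvalN_le_card hz F⟩ ⟨y, hy, rfl⟩)

lemma lagrangianN_le_lagrangianN_compression {i j : ℕ} (hij : i ≠ j) (E : Finset (Finset ℕ)) :
    lagrangianN E ≤ lagrangianN (𝓒 {i} {j} E) :=
  lagrangianN_le_of_forall_exists fun _ hx =>
    ⟨_, hx.maxMinAt hij, lagEvalN_le_lagEvalN_compression hx.1 hij E⟩

lemma exists_shiftClosed_le_lagrangianN {r : ℕ} (F : Finset (Finset ℕ))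
    (hF : (F : Set (Finset ℕ)).Sized r) :
    ∃ G, ShiftClosed G ∧ (G : Set (Finset ℕ)).Sized r ∧ #G = #F ∧
      lagrangianN F ≤ lagrangianN G := by
  induction hs : ∑ e ∈ F, ∑ v ∈ e, v using Nat.strong_induction_on generalizing F with
  | _ n ih =>
    by_cases hF' : ShiftClosed F
    · exact ⟨F, hF', hF, rfl, le_rfl⟩
    simp only [ShiftClosed, not_forall] at hF'
    obtain ⟨e, he, i, j, hij, hce⟩ := hF'
    obtain ⟨G, hG, hGr, hGc, hGl⟩ := ih _ (hs ▸ vertexSum_compression_lt hij he hce)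
      (𝓒 {i} {j} F) (hF.uvCompression rfl) rfl
    exact ⟨G, hG, hGr, hGc.trans (card_compression _ _ _),
      (lagrangianN_le_lagrangianN_compression hij.ne F).trans hGl⟩

theorem exists_left_compressed_extremal_general {m t r : ℕ}
    (hmt : m + 1 ≤ t.choose r) :
    ∃ E : Finset (Finset ℕ), (∀ e ∈ E, e.card = r) ∧ E.card = m ∧ LeftCompressedN E ∧
      lagrangianN E = sSup {v | ∃ F : Finset (Finset ℕ),
        (∀ e ∈ F, e.card = r) ∧ F.card = m ∧ lagrangianN F = v} := by
  classical
  obtain ⟨F₀, hF₀, hF₀m⟩ := exists_subset_card_eq (s := (range t).powersetCard r) (n := m)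
    (by rw [card_powersetCard, card_range]; omega)
  set S := {G ∈ (range (m + r)).powerset.powerset |
    ShiftClosed G ∧ (G : Set (Finset ℕ)).Sized r ∧ #G = m}
  have hS {G} : G ∈ S ↔ ShiftClosed G ∧ (G : Set (Finset ℕ)).Sized r ∧ #G = m :=
    mem_filter.trans ⟨And.right, fun hG =>
      ⟨hG.2.2 ▸ hG.1.mem_powerset_powerset_range hG.2.1, hG⟩⟩
  have hmax (F : Finset (Finset ℕ)) (hF : (F : Set (Finset ℕ)).Sized r) (hFm : #F = m) :
      ∃ G ∈ S, lagrangianN F ≤ lagrangianN G := by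
    obtain ⟨G, hG, hGr, hGm, hFG⟩ := exists_shiftClosed_le_lagrangianN F hF
    exact ⟨G, hS.2 ⟨hG, hGr, hGm.trans hFm⟩, hFG⟩
  obtain ⟨G₀, hG₀S, -⟩ := hmax F₀ (fun e he => (mem_powersetCard.1 (hF₀ he)).2) hF₀m
  obtain ⟨G, hGS, hG⟩ := S.exists_max_image lagrangianN ⟨G₀, hG₀S⟩
  obtain ⟨hGc, hGr, hGm⟩ := hS.1 hGS
  refine ⟨G, fun e he => hGr he, hGm, hGc.leftCompressedN, le_antisymm ?_ ?_⟩
  · refine le_csSup ⟨m, ?_⟩ ⟨G, fun e he => hGr he, hGm, rfl⟩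
    rintro _ ⟨F, -, hFm, rfl⟩
    exact hFm ▸ lagrangianN_le_card F
  · refine csSup_le ⟨_, G, fun e he => hGr he, hGm, rfl⟩ ?_
    rintro _ ⟨F, hF, hFm, rfl⟩
    obtain ⟨G', hG'S, hFG'⟩ := hmax F (fun e he => hF e he) hFm
    exact hFG'.trans (hG G' hG'S)

/-- Talbot: for `m ≤ C(t,r) − 1` there is a left-compressed `r`-graph with `m` edges
attaining the maximum Lagrangian `λ_m^r` over all `r`-graphs with `m` edges. -/
theorem exists_left_compressed_extremal {m t r : ℕ}
    (hm : 0 < m) (ht : 0 < t) (hr : 0 < r) (hmt : m + 1 ≤ t.choose r) :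
    ∃ E : Finset (Finset ℕ), (∀ e ∈ E, e.card = r) ∧ E.card = m ∧ LeftCompressedN E ∧
      lagrangianN E = sSup {v | ∃ F : Finset (Finset ℕ),
        (∀ e ∈ F, e.card = r) ∧ F.card = m ∧ lagrangianN F = v} :=
  exists_left_compressed_extremal_general hmt
end

section
/- There are exactly two left-compressed r-uniform hypergraphs on vertex set [t] with C(t,r) − 3 edges: the complement in [t]^(r) of {(t−r+1)(t−r+2)···t, (t−r)(t−r+2)···t, (t−r)(t−r+1)(t−r+3)···t}, and the complement of {(t−r+1)(t−r+2)···t, (t−r)(t−r+2)···t, (t−r−1)(t−r+2)···t} (assuming t ≥ r+2). -/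
open Finset

/-- `E` is left-compressed on the vertex set `V`: whenever `f ⊆ V` and the increasing
enumeration of `f` is pointwise at most that of an edge `e`, `f` is also an edge. -/
def LeftCompressedOn (V : Finset ℕ) (E : Finset (Finset ℕ)) : Prop :=
  ∀ e ∈ E, ∀ f : Finset ℕ, f ⊆ V →
    List.Forall₂ (· ≤ ·) (f.sort (· ≤ ·)) (e.sort (· ≤ ·)) → f ∈ E

/-!
Order the `r`-subsets of `[t]` by the shifting order: `f ≤ e` when the `i`-th smallest element
of `f` is at most the `i`-th smallest element of `e` for every `i`. Left-compression says exactly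
that `E` is a down-set, so the three missing edges form an up-set `F`. The order has a top
`T = {t-r+1,…,t}`; every other set lies below `A = {t-r, t-r+2,…,t}`; and every set other than
`T` and `A` lies below `B₁ = {t-r, t-r+1, t-r+3,…,t}` or `B₂ = {t-r-1, t-r+2,…,t}`, which are
incomparable. Hence `F` contains `T`, `A` and one of `B₁`, `B₂`, and conversely `{T, A, B₁}` and
`{T, A, B₂}` are up-sets.
-/

namespace List

theorem Forall₂.le_trans {α : Type*} [Preorder α] :
    ∀ {l₁ l₂ l₃ : List α}, Forall₂ (· ≤ ·) l₁ l₂ → Forall₂ (· ≤ ·) l₂ l₃ → Forall₂ (· ≤ ·) l₁ l₃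
  | [], [], [], .nil, .nil => .nil
  | _ :: _, _ :: _, _ :: _, .cons h₁ t₁, .cons h₂ t₂ => .cons (h₁.trans h₂) (t₁.le_trans t₂)

theorem Forall₂.le_antisymm {α : Type*} [PartialOrder α] :
    ∀ {l₁ l₂ : List α}, Forall₂ (· ≤ ·) l₁ l₂ → Forall₂ (· ≤ ·) l₂ l₁ → l₁ = l₂
  | [], [], .nil, .nil => rfl
  | _ :: _, _ :: _, .cons h₁ t₁, .cons h₂ t₂ => by rw [h₁.antisymm h₂, t₁.le_antisymm t₂]

theorem forall₂_le_range' : ∀ {l : List ℕ} {c : ℕ}, l.Pairwise (· < ·) →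
    (∀ x ∈ l, x < c + l.length) → Forall₂ (· ≤ ·) l (range' c l.length)
  | [], _, _, _ => .nil
  | a :: l, c, hl, hc => by
    have ih := forall₂_le_range' (c := c + 1) hl.of_cons fun x hx => by
      have := hc x (.tail _ hx)
      simp only [length_cons] at this
      omega
    rw [length_cons, range'_succ]
    refine .cons ?_ ih
    cases ih with
    | nil => have := hc a (.head _); simp at this; omega
    | cons hb _ => have := rel_of_pairwise_cons hl (mem_cons_self ..); omega

end List

namespace Finset

theorem sort_eq_min'_cons {α : Type*} [LinearOrder α] {s : Finset α} (hs : s.Nonempty) :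
    s.sort = s.min' hs :: (s.erase (s.min' hs)).sort := by
  conv_lhs => rw [← insert_erase (s.min'_mem hs)]
  exact sort_insert _ (fun b hb => s.min'_le b (mem_of_mem_erase hb)) (notMem_erase _ _)

theorem sort_Icc (a b : ℕ) : (Icc a b).sort = List.range' a (b + 1 - a) := by
  have hIcc : Icc a b = (List.range' a (b + 1 - a)).toFinset := by
    ext x
    simp only [mem_Icc, List.mem_toFinset, List.mem_range'_1]
    omega
  rw [hIcc, List.toFinset_sort _ List.nodup_range']
  exact (List.pairwise_lt_range' ..).imp le_of_lt

theorem forall₂_sort_le_range' {s : Finset ℕ} {c : ℕ} (hs : ∀ x ∈ s, x < c + s.card) :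
    List.Forall₂ (· ≤ ·) s.sort (List.range' c s.card) := by
  rw [← length_sort (· ≤ ·)]
  exact List.forall₂_le_range' (sortedLT_sort s).pairwise fun x hx =>
    by simpa using hs x ((mem_sort _).1 hx)

end Finset

def ShiftLE (f e : Finset ℕ) : Prop :=
  List.Forall₂ (· ≤ ·) f.sort e.sort

namespace ShiftLE

variable {f e g : Finset ℕ}

theorem card_eq (h : ShiftLE f e) : f.card = e.card := by
  simpa using h.length_eq

theorem trans (h : ShiftLE f e) (h' : ShiftLE e g) : ShiftLE f g :=
  List.Forall₂.le_trans h h'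

theorem antisymm (h : ShiftLE f e) (h' : ShiftLE e f) : f = e := by
  rw [← sort_toFinset f (· ≤ ·), ← sort_toFinset e (· ≤ ·), List.Forall₂.le_antisymm h h']

end ShiftLE

def IsShiftUpClosed (P F : Finset (Finset ℕ)) : Prop :=
  ∀ f ∈ F, ∀ g ∈ P, ShiftLE f g → g ∈ F

section Complement

variable {E : Finset (Finset ℕ)} {V : Finset ℕ} {r : ℕ}

theorem leftCompressedOn_iff_isShiftUpClosed_sdiff (hE : E ⊆ V.powersetCard r) :
    LeftCompressedOn V E ↔ IsShiftUpClosed (V.powersetCard r) (V.powersetCard r \ E) := by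
  constructor
  · intro hLC f hf g hg hfg
    refine mem_sdiff.2 ⟨hg, fun hgE => (mem_sdiff.1 hf).2 ?_⟩
    exact hLC g hgE f (mem_powersetCard.1 (mem_sdiff.1 hf).1).1 hfg
  · intro hup e he f hfV hfe
    by_contra hf
    have hfP : f ∈ V.powersetCard r :=
      mem_powersetCard.2 ⟨hfV, (ShiftLE.card_eq hfe).trans (mem_powersetCard.1 (hE he)).2⟩
    exact (mem_sdiff.1 (hup f (mem_sdiff.2 ⟨hfP, hf⟩) e (hE he) hfe)).2 he

theorem leftCompressedOn_card_sub_iff {k : ℕ} (hk : k ≤ (V.powersetCard r).card) :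
    (E ⊆ V.powersetCard r ∧ E.card = (V.powersetCard r).card - k ∧ LeftCompressedOn V E) ↔
      ∃ F, (F ⊆ V.powersetCard r ∧ F.card = k ∧ IsShiftUpClosed (V.powersetCard r) F) ∧
        E = V.powersetCard r \ F := by
  constructor
  · rintro ⟨hE, hcard, hLC⟩
    refine ⟨_, ⟨sdiff_subset, ?_, (leftCompressedOn_iff_isShiftUpClosed_sdiff hE).1 hLC⟩,
      (Finset.sdiff_sdiff_eq_self hE).symm⟩
    rw [card_sdiff_of_subset hE, hcard]
    omega
  · rintro ⟨F, ⟨hF, hcard, hup⟩, rfl⟩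
    refine ⟨sdiff_subset, by rw [card_sdiff_of_subset hF, hcard], ?_⟩
    rwa [leftCompressedOn_iff_isShiftUpClosed_sdiff sdiff_subset, Finset.sdiff_sdiff_eq_self hF]

end Complement

section TopOfShiftOrder

variable (t r : ℕ)

def topSet : Finset ℕ := Icc (t - r + 1) t

def secondSet : Finset ℕ := insert (t - r) (Icc (t - r + 2) t)

def thirdSet₁ : Finset ℕ := insert (t - r) (insert (t - r + 1) (Icc (t - r + 3) t))

def thirdSet₂ : Finset ℕ := insert (t - r - 1) (Icc (t - r + 2) t)

variable {t r}

theorem sort_topSet (h : r ≤ t) : (topSet t r).sort = List.range' (t - r + 1) r := by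
  rw [topSet, sort_Icc]
  congr 1
  omega

theorem sort_secondSet (h : r ≤ t) :
    (secondSet t r).sort = (t - r) :: List.range' (t - r + 2) (r - 1) := by
  rw [secondSet, sort_insert _ (fun b hb => by simp at hb; omega) (by simp), sort_Icc]
  congr 2
  omega

theorem sort_thirdSet₁ (h : r ≤ t) :
    (thirdSet₁ t r).sort = (t - r) :: (t - r + 1) :: List.range' (t - r + 3) (r - 2) := by
  rw [thirdSet₁, sort_insert _ (fun b hb => by simp at hb; omega) (by simp),
    sort_insert _ (fun b hb => by simp at hb; omega) (by simp), sort_Icc]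
  congr 3
  omega

theorem sort_thirdSet₂ (h : r ≤ t) :
    (thirdSet₂ t r).sort = (t - r - 1) :: List.range' (t - r + 2) (r - 1) := by
  rw [thirdSet₂, sort_insert _ (fun b hb => by simp at hb; omega) (by simp; omega), sort_Icc]
  congr 2
  omega

end TopOfShiftOrder

section Membership

variable {t r : ℕ}

theorem le_of_mem_powersetCard_Icc {f : Finset ℕ} (hf : f ∈ (Icc 1 t).powersetCard r) : r ≤ t := by
  simpa [(mem_powersetCard.1 hf).2] using card_le_card (mem_powersetCard.1 hf).1

theorem mem_powersetCard_Icc_of_sort_eq {s : Finset ℕ} {l : List ℕ} (hs : s.sort = l)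
    (hl : l.length = r) (hmem : ∀ x ∈ l, 1 ≤ x ∧ x ≤ t) : s ∈ (Icc 1 t).powersetCard r := by
  refine mem_powersetCard.2 ⟨fun x hx => mem_Icc.2 (hmem x ?_), ?_⟩
  · rwa [← hs, mem_sort]
  · rw [← length_sort (· ≤ ·), hs, hl]

theorem topSet_mem (h : r ≤ t) : topSet t r ∈ (Icc 1 t).powersetCard r :=
  mem_powersetCard_Icc_of_sort_eq (sort_topSet h) (by simp) fun x hx => by simp at hx; omega

theorem secondSet_mem (hr : 1 ≤ r) (h : r < t) : secondSet t r ∈ (Icc 1 t).powersetCard r :=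
  mem_powersetCard_Icc_of_sort_eq (sort_secondSet h.le) (by simp; omega) fun x hx => by
    simp at hx; omega

theorem thirdSet₁_mem (hr : 2 ≤ r) (h : r < t) : thirdSet₁ t r ∈ (Icc 1 t).powersetCard r :=
  mem_powersetCard_Icc_of_sort_eq (sort_thirdSet₁ h.le) (by simp; omega) fun x hx => by
    simp at hx; omega

theorem thirdSet₂_mem (hr : 1 ≤ r) (h : r + 1 < t) : thirdSet₂ t r ∈ (Icc 1 t).powersetCard r :=
  mem_powersetCard_Icc_of_sort_eq (sort_thirdSet₂ (by omega)) (by simp; omega) fun x hx => by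
    simp at hx; omega

theorem card_topSet_secondSet_thirdSet₁ :
    ({topSet t r, secondSet t r, thirdSet₁ t r} : Finset (Finset ℕ)).card = 3 :=
  card_eq_three.2 ⟨_, _, _,
    (ne_of_mem_of_not_mem' (a := t - r) (by simp [secondSet]) (by simp [topSet])).symm,
    (ne_of_mem_of_not_mem' (a := t - r) (by simp [thirdSet₁]) (by simp [topSet])).symm,
    (ne_of_mem_of_not_mem' (a := t - r + 1) (by simp [thirdSet₁]) (by simp [secondSet])).symm,
    rfl⟩

theorem card_topSet_secondSet_thirdSet₂ (h : r < t) :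
    ({topSet t r, secondSet t r, thirdSet₂ t r} : Finset (Finset ℕ)).card = 3 :=
  card_eq_three.2 ⟨_, _, _,
    (ne_of_mem_of_not_mem' (a := t - r) (by simp [secondSet]) (by simp [topSet])).symm,
    (ne_of_mem_of_not_mem' (a := t - r - 1) (by simp [thirdSet₂]) (by simp [topSet])).symm,
    (ne_of_mem_of_not_mem' (a := t - r - 1) (by simp [thirdSet₂]) (by simp [secondSet]; omega)).symm,
    rfl⟩

end Membership

section ShiftOrder

variable {t r : ℕ} {f g : Finset ℕ}

theorem shiftLE_topSet (hf : f ∈ (Icc 1 t).powersetCard r) : ShiftLE f (topSet t r) := by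
  obtain ⟨hfV, hcard⟩ := mem_powersetCard.1 hf
  rw [ShiftLE, sort_topSet (le_of_mem_powersetCard_Icc hf), ← hcard]
  exact forall₂_sort_le_range' fun x hx => by have := mem_Icc.1 (hfV hx); omega

theorem shiftLE_secondSet (hf : f ∈ (Icc 1 t).powersetCard r) (hT : f ≠ topSet t r) :
    ShiftLE f (secondSet t r) := by
  obtain ⟨hfV, hcard⟩ := mem_powersetCard.1 hf
  have hrt := le_of_mem_powersetCard_Icc hf
  obtain ⟨x, hxf, hx⟩ : ∃ x ∈ f, x ≤ t - r := by
    by_contra! hlarge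
    refine hT (eq_of_subset_of_card_le (fun y hy => ?_) ?_)
    · have := mem_Icc.1 (hfV hy)
      have := hlarge y hy
      rw [topSet, mem_Icc]
      omega
    · rw [hcard, (mem_powersetCard.1 (topSet_mem hrt)).2]
  have hne : f.Nonempty := ⟨x, hxf⟩
  have hcard' : (f.erase (f.min' hne)).card = r - 1 := by
    rw [card_erase_of_mem (min'_mem f hne), hcard]
  rw [ShiftLE, sort_eq_min'_cons hne, sort_secondSet hrt, ← hcard']
  refine .cons ((f.min'_le x hxf).trans hx) (forall₂_sort_le_range' fun y hy => ?_)
  have := mem_Icc.1 (hfV (mem_of_mem_erase hy))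
  omega

theorem shiftLE_thirdSet₁_or_shiftLE_thirdSet₂ (hr : 2 ≤ r) (hf : f ∈ (Icc 1 t).powersetCard r)
    (hT : f ≠ topSet t r) (hA : f ≠ secondSet t r) :
    ShiftLE f (thirdSet₁ t r) ∨ ShiftLE f (thirdSet₂ t r) := by
  obtain ⟨hfV, hcard⟩ := mem_powersetCard.1 hf
  have hrt := le_of_mem_powersetCard_Icc hf
  have hne : f.Nonempty := card_pos.1 (by omega)
  have hne' : (f.erase (f.min' hne)).Nonempty :=
    card_pos.1 (by rw [card_erase_of_mem (min'_mem f hne)]; omega)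
  have hle := shiftLE_secondSet hf hT
  rw [ShiftLE, sort_eq_min'_cons hne, sort_secondSet hrt] at hle
  obtain _ | ⟨ha, htail⟩ := hle
  rw [ShiftLE, ShiftLE, sort_eq_min'_cons hne, sort_thirdSet₁ hrt, sort_thirdSet₂ hrt]
  rcases ha.lt_or_eq with ha | ha
  · exact .inr (.cons (by omega) htail)
  rw [sort_eq_min'_cons hne', show r - 1 = r - 2 + 1 by omega, List.range'_succ] at htail
  rw [sort_eq_min'_cons hne']
  obtain _ | ⟨hb, htail'⟩ := htail
  refine .inl (.cons ha.le (.cons ?_ htail'))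
  -- otherwise `f ⊆ secondSet t r`: its minimum is `t - r` and all other elements are `≥ t - r + 2`
  by_contra! hb'
  refine hA (eq_of_subset_of_card_le (fun x hx => ?_) ?_)
  · have := mem_Icc.1 (hfV hx)
    rw [secondSet, mem_insert, mem_Icc]
    by_cases hxa : x = f.min' hne
    · exact .inl (hxa.trans ha)
    · have := (f.erase (f.min' hne)).min'_le x (mem_erase.2 ⟨hxa, hx⟩)
      omega
  · have := mem_Icc.1 (hfV (min'_mem f hne))
    rw [hcard, (mem_powersetCard.1 (secondSet_mem (by omega) (by omega))).2]

end ShiftOrder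

section UpSets

variable {t r : ℕ} {g : Finset ℕ}

theorem eq_topSet_of_topSet_shiftLE (hg : g ∈ (Icc 1 t).powersetCard r)
    (h : ShiftLE (topSet t r) g) : g = topSet t r :=
  (shiftLE_topSet hg).antisymm h

theorem eq_topSet_or_eq_secondSet_of_secondSet_shiftLE (hg : g ∈ (Icc 1 t).powersetCard r)
    (h : ShiftLE (secondSet t r) g) : g = topSet t r ∨ g = secondSet t r :=
  or_iff_not_imp_left.2 fun hT => (shiftLE_secondSet hg hT).antisymm h

theorem eq_of_thirdSet₁_shiftLE (hr : 2 ≤ r) (ht : r < t) (hg : g ∈ (Icc 1 t).powersetCard r)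
    (h : ShiftLE (thirdSet₁ t r) g) :
    g = topSet t r ∨ g = secondSet t r ∨ g = thirdSet₁ t r := by
  by_cases hT : g = topSet t r
  · exact .inl hT
  by_cases hA : g = secondSet t r
  · exact .inr (.inl hA)
  refine .inr (.inr ?_)
  rcases shiftLE_thirdSet₁_or_shiftLE_thirdSet₂ hr hg hT hA with h₁ | h₂
  · exact h₁.antisymm h
  · have h₁₂ := h.trans h₂
    rw [ShiftLE, sort_thirdSet₁ ht.le, sort_thirdSet₂ ht.le] at h₁₂
    obtain _ | ⟨hle, -⟩ := h₁₂
    omega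

theorem eq_of_thirdSet₂_shiftLE (hr : 2 ≤ r) (hg : g ∈ (Icc 1 t).powersetCard r)
    (h : ShiftLE (thirdSet₂ t r) g) :
    g = topSet t r ∨ g = secondSet t r ∨ g = thirdSet₂ t r := by
  by_cases hT : g = topSet t r
  · exact .inl hT
  by_cases hA : g = secondSet t r
  · exact .inr (.inl hA)
  refine .inr (.inr ?_)
  rcases shiftLE_thirdSet₁_or_shiftLE_thirdSet₂ hr hg hT hA with h₁ | h₂
  · have h₂₁ := h.trans h₁
    have hrt := le_of_mem_powersetCard_Icc hg
    rw [ShiftLE, sort_thirdSet₁ hrt, sort_thirdSet₂ hrt, show r - 1 = r - 2 + 1 by omega,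
      List.range'_succ] at h₂₁
    obtain _ | ⟨-, _ | ⟨hle, -⟩⟩ := h₂₁
    omega
  · exact h₂.antisymm h

theorem isShiftUpClosed_topSet_secondSet {B : Finset ℕ}
    (hB : ∀ g ∈ (Icc 1 t).powersetCard r, ShiftLE B g →
      g = topSet t r ∨ g = secondSet t r ∨ g = B) :
    IsShiftUpClosed ((Icc 1 t).powersetCard r) {topSet t r, secondSet t r, B} := by
  intro f hf g hg hfg
  simp only [mem_insert, mem_singleton] at hf ⊢
  rcases hf with rfl | rfl | rfl
  · exact .inl (eq_topSet_of_topSet_shiftLE hg hfg)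
  · exact (eq_topSet_or_eq_secondSet_of_secondSet_shiftLE hg hfg).imp_right .inl
  · exact hB g hg hfg

theorem isShiftUpClosed_card_eq_three_iff (hr : 2 ≤ r) (ht : r + 2 ≤ t) {F : Finset (Finset ℕ)} :
    (F ⊆ (Icc 1 t).powersetCard r ∧ F.card = 3 ∧
        IsShiftUpClosed ((Icc 1 t).powersetCard r) F) ↔
      F = {topSet t r, secondSet t r, thirdSet₁ t r} ∨
        F = {topSet t r, secondSet t r, thirdSet₂ t r} := by
  have hT := topSet_mem (t := t) (r := r) (by omega)
  have hA := secondSet_mem (t := t) (r := r) (by omega) (by omega)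
  have hB₁ := thirdSet₁_mem (t := t) hr (by omega)
  have hB₂ := thirdSet₂_mem (t := t) (r := r) (by omega) (by omega)
  constructor
  · rintro ⟨hFP, hcard, hup⟩
    obtain ⟨f, hf⟩ : F.Nonempty := card_pos.1 (by omega)
    have hTF := hup f hf _ hT (shiftLE_topSet (hFP hf))
    obtain ⟨g, hg, hgT⟩ := exists_mem_notMem_of_card_lt_card (s := {topSet t r}) (t := F)
      (by rw [card_singleton, hcard]; omega)
    have hAF := hup g hg _ hA (shiftLE_secondSet (hFP hg) (by simpa using hgT))
    obtain ⟨c, hc, hcTA⟩ := exists_mem_notMem_of_card_lt_card (s := {topSet t r, secondSet t r})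
      (t := F) (card_le_two.trans_lt (by omega))
    simp only [mem_insert, mem_singleton, not_or] at hcTA
    have eq_triple : ∀ B ∈ F, ({topSet t r, secondSet t r, B} : Finset _).card = 3 →
        F = {topSet t r, secondSet t r, B} := fun B hBF h3 =>
      (eq_of_subset_of_card_le (by simp [insert_subset_iff, *]) (by omega)).symm
    rcases shiftLE_thirdSet₁_or_shiftLE_thirdSet₂ hr (hFP hc) hcTA.1 hcTA.2 with h | h
    · exact .inl (eq_triple _ (hup c hc _ hB₁ h) card_topSet_secondSet_thirdSet₁)
    · exact .inr (eq_triple _ (hup c hc _ hB₂ h) (card_topSet_secondSet_thirdSet₂ (by omega)))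
  · rintro (rfl | rfl)
    · exact ⟨by simp [insert_subset_iff, *], card_topSet_secondSet_thirdSet₁,
        isShiftUpClosed_topSet_secondSet fun g hg h => eq_of_thirdSet₁_shiftLE hr (by omega) hg h⟩
    · exact ⟨by simp [insert_subset_iff, *], card_topSet_secondSet_thirdSet₂ (by omega),
        isShiftUpClosed_topSet_secondSet fun g hg h => eq_of_thirdSet₂_shiftLE hr hg h⟩

end UpSets

/-- There are exactly two left-compressed `r`-graphs on `[t]` with `C(t,r) − 3` edges. -/
theorem left_compressed_choose_sub_three {t r : ℕ} (hr : 2 ≤ r) (ht : r + 2 ≤ t) :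
    ∀ E : Finset (Finset ℕ),
      (E ⊆ (Finset.Icc 1 t).powersetCard r ∧ E.card = t.choose r - 3 ∧
        LeftCompressedOn (Finset.Icc 1 t) E) ↔
      (E = (Finset.Icc 1 t).powersetCard r \
            {Finset.Icc (t - r + 1) t,
             insert (t - r) (Finset.Icc (t - r + 2) t),
             insert (t - r) (insert (t - r + 1) (Finset.Icc (t - r + 3) t))} ∨
       E = (Finset.Icc 1 t).powersetCard r \
            {Finset.Icc (t - r + 1) t,
             insert (t - r) (Finset.Icc (t - r + 2) t),
             insert (t - r - 1) (Finset.Icc (t - r + 2) t)}) := by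
  intro E
  have hcard : ((Icc 1 t).powersetCard r).card = t.choose r := by simp
  have hthree : 3 ≤ ((Icc 1 t).powersetCard r).card :=
    card_topSet_secondSet_thirdSet₁.symm.le.trans <| card_le_card <|
      ((isShiftUpClosed_card_eq_three_iff hr ht).2 (.inl rfl)).1
  rw [← hcard, leftCompressedOn_card_sub_iff hthree]
  simp only [isShiftUpClosed_card_eq_three_iff hr ht, or_and_right, exists_or, exists_eq_left]
  rfl
end
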